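/- arXiv:2408.08745 — 4 statements merged into one kernel-verified Lean document; each statement's English description precedes it below -/
import Mathlib

section
/- Let φ ∈ C¹(𝕋, ℝ₊) with φ > 0, H ∈ C³(𝕋 × 𝕋, ℝ), δ ∈ ℝ, and define g_φ(x) = x + δ ∫_𝕋 H(x,y) φ(y)/(∫φ) dy (mod 1). Then the map φ ↦ g_φ is Gateaux differentiable in the C⁰ sense, and for ψ ∈ C¹(𝕋, ℝ) its derivative is Dg_φ(ψ)(x) = δ (1/∫φ) ∫_𝕋 H(x,y) [ψ(y) − φ(y)·(∫ψ)/(∫φ)] dy; moreover x ↦ Dg_φ(ψ)(x) is C³. -/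
/-!
With `A = ∫ φ` and `B = ∫ ψ`, linearity of the integral makes the difference quotient at `s`
exactly `A / (A + s B) • Dg_φ(ψ)`. Since `Dg_φ(ψ)` is continuous and `1`-periodic, it is
bounded, so the quotients converge to it uniformly as the scalar factor tends to `1`. Its `C³`
regularity comes from differentiating under the integral sign three times.
-/

open Filter intervalIntegral MeasureTheory Metric Set Topology

section ParametricIntegral

variable {F : ℝ → ℝ → ℝ} {h : ℝ → ℝ}

theorem hasDerivAt_intervalIntegral_mul (hF : ContDiff ℝ 1 (Function.uncurry F))
    (hh : Continuous h) (a b x₀ : ℝ) :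
    HasDerivAt (fun x => ∫ y in a..b, F x y * h y)
      (∫ y in a..b, fderiv ℝ (Function.uncurry F) (x₀, y) (1, 0) * h y) x₀ := by
  have hFc : Continuous (Function.uncurry F) := hF.continuous
  have hF' : Continuous fun p : ℝ × ℝ => fderiv ℝ (Function.uncurry F) p (1, 0) :=
    (hF.continuous_fderiv one_ne_zero).clm_apply continuous_const
  obtain ⟨C, hC⟩ := ((isCompact_closedBall x₀ 1).prod isCompact_uIcc).exists_bound_of_continuousOn
    (hF'.mul (hh.comp continuous_snd)).continuousOn
  refine (hasDerivAt_integral_of_dominated_loc_of_deriv_le (F := fun x y => F x y * h y)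
    (F' := fun x y => fderiv ℝ (Function.uncurry F) (x, y) (1, 0) * h y) (bound := fun _ => C)
    (ball_mem_nhds x₀ one_pos) ?_ ?_ ?_ ?_ intervalIntegrable_const ?_).2
  · exact .of_forall fun x =>
      ((hFc.comp (Continuous.prodMk_right x)).mul hh).aestronglyMeasurable
  · exact ((hFc.comp (Continuous.prodMk_right x₀)).mul hh).intervalIntegrable a b
  · exact ((hF'.comp (Continuous.prodMk_right x₀)).mul hh).aestronglyMeasurable
  · exact .of_forall fun y hy x hx =>
      hC (x, y) ⟨ball_subset_closedBall hx, uIoc_subset_uIcc hy⟩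
  · refine .of_forall fun y _ x _ => ?_
    have hxy : HasFDerivAt (Function.uncurry F) (fderiv ℝ (Function.uncurry F) (x, y)) (x, y) :=
      (hF.differentiable one_ne_zero (x, y)).hasFDerivAt
    exact (hxy.comp_hasDerivAt x ((hasDerivAt_id x).prodMk (hasDerivAt_const x y))).mul_const (h y)

theorem contDiff_intervalIntegral_mul (n : ℕ) (hF : ContDiff ℝ n (Function.uncurry F))
    (hh : Continuous h) (a b : ℝ) :
    ContDiff ℝ n (fun x => ∫ y in a..b, F x y * h y) := by
  induction n generalizing F with
  | zero =>
    exact contDiff_zero.2 <| continuous_parametric_intervalIntegral_of_continuous'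
      (hF.continuous.mul (hh.comp continuous_snd)) a b
  | succ n ih =>
    have hderiv := hasDerivAt_intervalIntegral_mul (hF.of_le (by norm_cast; omega)) hh a b
    rw [Nat.cast_succ, contDiff_succ_iff_deriv]
    refine ⟨fun x => (hderiv x).differentiableAt, by simp, ?_⟩
    rw [funext fun x => (hderiv x).deriv]
    exact ih (((ContinuousLinearMap.apply ℝ ℝ ((1 : ℝ), (0 : ℝ))).contDiff).comp
      (hF.fderiv_right le_rfl))

end ParametricIntegral

theorem tendstoUniformly_smul_of_isBounded {ι α 𝕜 E : Type*} [NormedField 𝕜]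
    [SeminormedAddCommGroup E] [NormedSpace 𝕜 E] {l : Filter ι} {c : ι → 𝕜} {g : α → E}
    (hc : Tendsto c l (𝓝 1)) (hg : Bornology.IsBounded (range g)) :
    TendstoUniformly (fun i x => c i • g x) g l := by
  obtain ⟨C, hC⟩ := isBounded_iff_forall_norm_le.mp hg
  have hsmall := (tendsto_iff_norm_sub_tendsto_zero.mp hc).mul_const C
  rw [zero_mul] at hsmall
  rw [Metric.tendstoUniformly_iff]
  intro ε hε
  filter_upwards [hsmall.eventually (gt_mem_nhds hε)] with i hi x
  rw [dist_eq_norm', ← one_smul 𝕜 (g x), smul_smul, mul_one, ← sub_smul, norm_smul]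
  grw [hC _ (mem_range_self x), hi]

theorem intervalIntegral_mul_add_const_mul {a b : ℝ} {f u v : ℝ → ℝ}
    (hu : IntervalIntegrable (fun y => f y * u y) volume a b)
    (hv : IntervalIntegrable (fun y => f y * v y) volume a b) (c : ℝ) :
    ∫ y in a..b, f y * (u y + c * v y) = (∫ y in a..b, f y * u y) + c * ∫ y in a..b, f y * v y := by
  rw [← intervalIntegral.integral_const_mul, ← integral_add hu (hv.const_mul c)]
  exact integral_congr fun y _ => by ring

theorem ratio_difference_quotient_eq {x δ F G A B s : ℝ} (hA : A ≠ 0) (hs : s ≠ 0)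
    (hAs : A + s * B ≠ 0) :
    ((x + δ * (F + s * G) / (A + s * B)) - (x + δ * F / A)) / s =
      A / (A + s * B) * (δ * A⁻¹ * (G + -(B / A) * F)) := by
  field_simp
  ring

theorem difference_quotient_weighted_average_eq {a b δ s x : ℝ} {H : ℝ → ℝ → ℝ} {φ ψ : ℝ → ℝ}
    (hH : Continuous (H x)) (hφ : Continuous φ) (hψ : Continuous ψ)
    (hA : ∫ y in a..b, φ y ≠ 0) (hs : s ≠ 0)
    (hAs : (∫ y in a..b, φ y) + s * ∫ y in a..b, ψ y ≠ 0) :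
    ((x + δ * (∫ y in a..b, H x y * (φ y + s * ψ y)) / (∫ y in a..b, (φ y + s * ψ y))) -
        (x + δ * (∫ y in a..b, H x y * φ y) / (∫ y in a..b, φ y))) / s =
      (∫ y in a..b, φ y) / ((∫ y in a..b, φ y) + s * ∫ y in a..b, ψ y) *
        (δ * (∫ y in a..b, φ y)⁻¹ * ∫ y in a..b, H x y *
          (ψ y - φ y * (∫ z in a..b, ψ z) / (∫ z in a..b, φ z))) := by
  have hHφ := (hH.mul hφ).intervalIntegrable (μ := volume) a b
  have hHψ := (hH.mul hψ).intervalIntegrable (μ := volume) a b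
  have hmass : ∫ y in a..b, (φ y + s * ψ y) = (∫ y in a..b, φ y) + s * ∫ y in a..b, ψ y := by
    rw [integral_add (hφ.intervalIntegrable a b) ((hψ.intervalIntegrable a b).const_mul s),
      intervalIntegral.integral_const_mul]
  have hderiv : ∫ y in a..b, H x y * (ψ y - φ y * (∫ z in a..b, ψ z) / (∫ z in a..b, φ z)) =
      ∫ y in a..b, H x y * (ψ y + -((∫ z in a..b, ψ z) / (∫ z in a..b, φ z)) * φ y) :=
    integral_congr fun y _ => by ring
  rw [hmass, hderiv, intervalIntegral_mul_add_const_mul hHφ hHψ,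
    intervalIntegral_mul_add_const_mul hHψ hHφ]
  exact ratio_difference_quotient_eq hA hs hAs

theorem stmt5_general (δ : ℝ) (H : ℝ → ℝ → ℝ) (φ ψ : ℝ → ℝ)
    (hφ : ContDiff ℝ 1 φ) (hψ : ContDiff ℝ 1 ψ)
    (hH : ContDiff ℝ 3 (Function.uncurry H))
    (hHperx : ∀ x y, H (x + 1) y = H x y)
    (hφint : 0 < ∫ y in (0:ℝ)..1, φ y) :
    TendstoUniformly
      (fun s : ℝ => fun x : ℝ =>
        ((x + δ * (∫ y in (0:ℝ)..1, H x y * (φ y + s * ψ y)) /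
            (∫ y in (0:ℝ)..1, (φ y + s * ψ y))) -
          (x + δ * (∫ y in (0:ℝ)..1, H x y * φ y) / (∫ y in (0:ℝ)..1, φ y))) / s)
      (fun x : ℝ => δ * (∫ y in (0:ℝ)..1, φ y)⁻¹ *
        ∫ y in (0:ℝ)..1, H x y *
          (ψ y - φ y * (∫ z in (0:ℝ)..1, ψ z) / (∫ z in (0:ℝ)..1, φ z)))
      (nhdsWithin (0 : ℝ) {(0 : ℝ)}ᶜ)
    ∧ ContDiff ℝ 3
      (fun x : ℝ => δ * (∫ y in (0:ℝ)..1, φ y)⁻¹ *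
        ∫ y in (0:ℝ)..1, H x y *
          (ψ y - φ y * (∫ z in (0:ℝ)..1, ψ z) / (∫ z in (0:ℝ)..1, φ z))) := by
  set A := ∫ y in (0:ℝ)..1, φ y
  set B := ∫ y in (0:ℝ)..1, ψ y
  set g := fun x => δ * A⁻¹ * ∫ y in (0:ℝ)..1, H x y * (ψ y - φ y * B / A)
  have hg : ContDiff ℝ 3 g :=
    contDiff_const.mul (contDiff_intervalIntegral_mul 3 hH (by fun_prop) 0 1)
  refine ⟨?_, hg⟩
  have hg_bdd : Bornology.IsBounded (range g) :=
    Function.Periodic.isBounded_of_continuous (fun x => by simp only [g, hHperx])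
      one_ne_zero hg.continuous
  have hden : Tendsto (fun s : ℝ => A + s * B) (𝓝[≠] 0) (𝓝 A) :=
    (Continuous.tendsto' (by fun_prop) 0 A (by simp)).mono_left nhdsWithin_le_nhds
  have hratio : Tendsto (fun s => A / (A + s * B)) (𝓝[≠] 0) (𝓝 1) := by
    have h := (tendsto_const_nhds (x := A)).div hden hφint.ne'
    rwa [div_self hφint.ne'] at h
  rw [← tendstoUniformlyOn_univ]
  refine (tendstoUniformlyOn_univ.2 (tendstoUniformly_smul_of_isBounded hratio hg_bdd)).congr ?_
  filter_upwards [self_mem_nhdsWithin, hden.eventually_ne hφint.ne'] with s hs hAs x _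
  exact (difference_quotient_weighted_average_eq (hH.continuous.comp (.prodMk_right x))
    hφ.continuous hψ.continuous hφint.ne' hs hAs).symm

/-- Gateaux differentiability (in the `C⁰` sense, i.e. uniformly in `x`)
of `φ ↦ g_φ`, with the explicit formula for the derivative, which is moreover `C³`. -/
theorem stmt5 (δ : ℝ) (H : ℝ → ℝ → ℝ) (φ ψ : ℝ → ℝ)
    (hφpos : ∀ x, 0 < φ x) (hφ : ContDiff ℝ 1 φ) (hψ : ContDiff ℝ 1 ψ)
    (hφper : Function.Periodic φ 1) (hψper : Function.Periodic ψ 1)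
    (hH : ContDiff ℝ 3 (Function.uncurry H))
    (hHperx : ∀ x y, H (x + 1) y = H x y) (hHpery : ∀ x y, H x (y + 1) = H x y)
    (hφint : 0 < ∫ y in (0:ℝ)..1, φ y) :
    TendstoUniformly
      (fun s : ℝ => fun x : ℝ =>
        ((x + δ * (∫ y in (0:ℝ)..1, H x y * (φ y + s * ψ y)) /
            (∫ y in (0:ℝ)..1, (φ y + s * ψ y))) -
          (x + δ * (∫ y in (0:ℝ)..1, H x y * φ y) / (∫ y in (0:ℝ)..1, φ y))) / s)
      (fun x : ℝ => δ * (∫ y in (0:ℝ)..1, φ y)⁻¹ *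
        ∫ y in (0:ℝ)..1, H x y *
          (ψ y - φ y * (∫ z in (0:ℝ)..1, ψ z) / (∫ z in (0:ℝ)..1, φ z)))
      (nhdsWithin (0 : ℝ) {(0 : ℝ)}ᶜ)
    ∧ ContDiff ℝ 3
      (fun x : ℝ => δ * (∫ y in (0:ℝ)..1, φ y)⁻¹ *
        ∫ y in (0:ℝ)..1, H x y *
          (ψ y - φ y * (∫ z in (0:ℝ)..1, ψ z) / (∫ z in (0:ℝ)..1, φ z))) :=
  stmt5_general δ H φ ψ hφ hψ hH hHperx hφint
end

section
/- For a > 0, define the cone 𝒱_a = {φ ∈ C¹(𝕋, ℝ₊) : φ(x)/φ(y) ≤ exp(a|x−y|) for all x,y}, equivalently |φ'(x)/φ(x)| ≤ a. Let g : 𝕋 → 𝕋 be a C² diffeomorphism with |g'|_∞ ≤ 1 + c₁, |(g^{-1})'|_∞ ≤ 1 + c₂, and |g''|_∞ ≤ c₃. Then for any ψ ∈ 𝒱_a, the pushforward density Lψ = (ψ/|g'|) ∘ g^{-1} satisfies |(Lψ)'/(Lψ)| ≤ a(1+c₂) + c₃(1+c₂)², hence Lψ ∈ 𝒱_{a(1+c₂)+c₃(1+c₂)²}.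 -/
/-- the transfer operator `Lψ = (ψ/|g'|) ∘ g⁻¹` of a `C²` diffeomorphism
with `|g'| ≤ 1+c₁`, `|(g⁻¹)'| ≤ 1+c₂`, `|g''| ≤ c₃` maps the `a`-log-Lipschitz cone
`𝒱_a` into `𝒱_{a(1+c₂)+c₃(1+c₂)²}`. -/
theorem stmt8 (a c₁ c₂ c₃ : ℝ) (ha : 0 < a) (hc₂ : 0 ≤ c₂) (hc₃ : 0 ≤ c₃)
    (ψ ψ' g g' g'' ginv : ℝ → ℝ)
    (hψpos : ∀ x, 0 < ψ x)
    (hψd : ∀ x, HasDerivAt ψ (ψ' x) x)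
    (hcone : ∀ x, |ψ' x| ≤ a * ψ x)
    (hgd : ∀ x, HasDerivAt g (g' x) x)
    (hgd2 : ∀ x, HasDerivAt g' (g'' x) x)
    (hg'pos : ∀ x, 0 < g' x)
    (hg'bd : ∀ x, |g' x| ≤ 1 + c₁)
    (hli : Function.LeftInverse ginv g) (hri : Function.RightInverse ginv g)
    (hginvd : ∀ x, HasDerivAt ginv ((g' (ginv x))⁻¹) x)
    (hginvbd : ∀ x, |(g' (ginv x))⁻¹| ≤ 1 + c₂)
    (hg''bd : ∀ x, |g'' x| ≤ c₃) :
    ∀ x, 0 < ψ (ginv x) / g' (ginv x) ∧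
      |deriv (fun z => ψ (ginv z) / g' (ginv z)) x| ≤
        (a * (1 + c₂) + c₃ * (1 + c₂) ^ 2) * (ψ (ginv x) / g' (ginv x)) := by
  intro x
  set u := ginv x with hu
  set p := ψ u with hp
  set q := g' u with hq
  have hqpos : 0 < q := hg'pos u
  have hq0 : q ≠ 0 := ne_of_gt hqpos
  have hppos : 0 < p := hψpos u
  constructor
  · exact div_pos hppos hqpos
  have h1 : HasDerivAt (fun z => ψ (ginv z)) (ψ' u * q⁻¹) x :=
    (hψd u).comp x (hginvd x)
  have h2 : HasDerivAt (fun z => g' (ginv z)) (g'' u * q⁻¹) x :=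
    (hgd2 u).comp x (hginvd x)
  have hD : HasDerivAt (fun z => ψ (ginv z) / g' (ginv z))
      ((ψ' u * q⁻¹ * q - p * (g'' u * q⁻¹)) / q ^ 2) x := h1.div h2 hq0
  rw [hD.deriv]
  have hqinv : q⁻¹ ≤ 1 + c₂ := by
    have := hginvbd x
    rw [abs_of_pos (inv_pos.mpr hqpos)] at this
    exact this
  have hqinvpos : 0 < q⁻¹ := inv_pos.mpr hqpos
  have hψ' : |ψ' u| ≤ a * p := hcone u
  have hg'' : |g'' u| ≤ c₃ := hg''bd u
  have key : |(ψ' u * q⁻¹ * q - p * (g'' u * q⁻¹)) / q ^ 2| ≤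
      |ψ' u| / q ^ 2 + p * |g'' u| * q⁻¹ / q ^ 2 := by
    rw [abs_div, abs_of_pos (by positivity : (0:ℝ) < q ^ 2), ← add_div]
    apply div_le_div_of_nonneg_right ?_ (by positivity)
    calc |ψ' u * q⁻¹ * q - p * (g'' u * q⁻¹)|
        ≤ |ψ' u * q⁻¹ * q| + |p * (g'' u * q⁻¹)| := abs_sub _ _
      _ = |ψ' u| + p * |g'' u| * q⁻¹ := by
          rw [abs_mul, abs_mul, abs_mul, abs_mul, abs_of_pos hppos,
            abs_of_pos hqinvpos, abs_of_pos hqpos]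
          field_simp
  refine key.trans ?_
  have hqle : q⁻¹ * q⁻¹ ≤ (1 + c₂) * (1 + c₂) :=
    mul_le_mul hqinv hqinv hqinvpos.le (by linarith)
  have e1 : |ψ' u| / q ^ 2 ≤ a * p * ((1 + c₂) * q⁻¹) := by
    have : |ψ' u| / q ^ 2 = |ψ' u| * q⁻¹ * q⁻¹ := by
      rw [sq, div_eq_mul_inv, mul_inv, ← mul_assoc]
    rw [this]
    calc |ψ' u| * q⁻¹ * q⁻¹ ≤ a * p * (1 + c₂) * q⁻¹ := by
          apply mul_le_mul_of_nonneg_right _ hqinvpos.le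
          exact mul_le_mul hψ' hqinv hqinvpos.le (by positivity)
      _ = a * p * ((1 + c₂) * q⁻¹) := by ring
  have e2 : p * |g'' u| * q⁻¹ / q ^ 2 ≤ c₃ * (1 + c₂) ^ 2 * p * q⁻¹ := by
    have : p * |g'' u| * q⁻¹ / q ^ 2 = p * |g'' u| * (q⁻¹ * q⁻¹) * q⁻¹ := by
      rw [sq, div_eq_mul_inv, mul_inv]; ring
    rw [this]
    apply mul_le_mul_of_nonneg_right _ hqinvpos.le
    calc p * |g'' u| * (q⁻¹ * q⁻¹) ≤ p * c₃ * ((1 + c₂) * (1 + c₂)) := by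
          apply mul_le_mul _ hqle (by positivity) (by positivity)
          exact mul_le_mul_of_nonneg_left hg'' hppos.le
      _ = c₃ * (1 + c₂) ^ 2 * p := by ring
  have : (a * (1 + c₂) + c₃ * (1 + c₂) ^ 2) * (p / q) =
      a * p * ((1 + c₂) * q⁻¹) + c₃ * (1 + c₂) ^ 2 * p * q⁻¹ := by
    field_simp
  rw [this]
  linarith
end

section
/- Let f(x) = kx mod 1 on 𝕋 with integer k ≥ 2 and transfer operator Pφ(x) = (1/k)Σ_{i=0}^{k−1} φ((x+i)/k). For α ≥ 0, let 𝒞_α = {φ ∈ C²(𝕋, ℝ₊) : |φ''(x)/φ(x)| ≤ α for all x}. Then P(𝒞_α) ⊂ 𝒞_{α/k²}. -/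
/-!
Each inverse branch `y ↦ (y + i) / k` of `x ↦ k x mod 1` is affine with slope `1 / k`, so
differentiating the transfer operator twice gives `(Pφ)'' = k⁻² · P(φ'')`. Since `P` is positive,
`|φ''| ≤ α φ` then yields `|(Pφ)''| ≤ α k⁻² · Pφ`.
-/

open Finset

/-- The transfer operator of `x ↦ k x mod 1`, acting on functions on `𝕋` through their lifts to `ℝ`. -/
noncomputable def transferOp (k : ℕ) (φ : ℝ → ℝ) (x : ℝ) : ℝ :=
  (k : ℝ)⁻¹ * ∑ i ∈ range k, φ ((x + i) / k)

section transferOp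

variable {k : ℕ} {φ ψ : ℝ → ℝ}

theorem transferOp_pos (hk : 0 < k) (hφ : ∀ y, 0 < φ y) (x : ℝ) : 0 < transferOp k φ x :=
  mul_pos (by positivity) (sum_pos (fun _ _ => hφ _) ⟨0, mem_range.mpr hk⟩)

theorem abs_transferOp_le (h : ∀ y, |ψ y| ≤ φ y) (x : ℝ) :
    |transferOp k ψ x| ≤ transferOp k φ x := by
  rw [transferOp, abs_mul, abs_inv, Nat.abs_cast]
  exact mul_le_mul_of_nonneg_left
    ((abs_sum_le_sum_abs _ _).trans (sum_le_sum fun _ _ => h _)) (by positivity)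

theorem transferOp_const_mul (c : ℝ) (x : ℝ) :
    transferOp k (fun y => c * φ y) x = c * transferOp k φ x := by
  simp only [transferOp, ← mul_sum]
  ring

theorem hasDerivAt_transferOp (hφ : Differentiable ℝ φ) (x : ℝ) :
    HasDerivAt (transferOp k φ) ((k : ℝ)⁻¹ * transferOp k (deriv φ) x) x := by
  have hbranch (i : ℕ) : HasDerivAt (fun z => φ ((z + i) / k))
      ((k : ℝ)⁻¹ * deriv φ ((x + i) / k)) x := by
    have := (hφ _).hasDerivAt.comp x (((hasDerivAt_id x).add_const (i : ℝ)).div_const (k : ℝ))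
    simpa [Function.comp_def, mul_comm] using this
  refine ((HasDerivAt.fun_sum (u := range k) fun i _ => hbranch i).const_mul
    (k : ℝ)⁻¹).congr_deriv ?_
  simp only [transferOp, mul_sum]

theorem deriv_transferOp (hφ : Differentiable ℝ φ) :
    deriv (transferOp k φ) = fun x => (k : ℝ)⁻¹ * transferOp k (deriv φ) x :=
  funext fun x => (hasDerivAt_transferOp hφ x).deriv

theorem deriv_deriv_transferOp (hφ : ContDiff ℝ 2 φ) :
    deriv (deriv (transferOp k φ)) =
      fun x => ((k : ℝ) ^ 2)⁻¹ * transferOp k (deriv (deriv φ)) x := by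
  have hφ' : ContDiff ℝ 1 (deriv φ) := hφ.iterate_deriv' 1 1
  rw [deriv_transferOp (hφ.differentiable two_ne_zero), deriv_const_mul_field',
    deriv_transferOp (hφ'.differentiable one_ne_zero)]
  ext x
  ring

end transferOp

theorem stmt10_general (k : ℕ) (hk : 2 ≤ k) (α : ℝ) (φ : ℝ → ℝ)
    (hφpos : ∀ x, 0 < φ x)
    (hφ : ContDiff ℝ 2 φ)
    (hcone : ∀ x, |deriv (deriv φ) x| ≤ α * φ x) :
    ∀ x : ℝ,
      0 < (k:ℝ)⁻¹ * ∑ i ∈ Finset.range k, φ ((x + (i:ℝ)) / (k:ℝ)) ∧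
      |deriv (deriv (fun z : ℝ =>
          (k:ℝ)⁻¹ * ∑ i ∈ Finset.range k, φ ((z + (i:ℝ)) / (k:ℝ)))) x| ≤
        (α / (k:ℝ)^2) * ((k:ℝ)⁻¹ * ∑ i ∈ Finset.range k, φ ((x + (i:ℝ)) / (k:ℝ))) := by
  intro x
  refine ⟨transferOp_pos (by omega) hφpos x, ?_⟩
  change |deriv (deriv (transferOp k φ)) x| ≤ α / (k : ℝ) ^ 2 * transferOp k φ x
  rw [deriv_deriv_transferOp hφ, abs_mul, abs_of_pos (by positivity), div_eq_inv_mul, mul_assoc,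
    ← transferOp_const_mul]
  exact mul_le_mul_of_nonneg_left (abs_transferOp_le hcone x) (by positivity)

/-- the transfer operator of `f(x) = kx mod 1` maps the cone
`𝒞_α = {φ ∈ C², φ > 0, |φ''/φ| ≤ α}` into `𝒞_{α/k²}`. -/
theorem stmt10 (k : ℕ) (hk : 2 ≤ k) (α : ℝ) (hα : 0 ≤ α) (φ : ℝ → ℝ)
    (hφpos : ∀ x, 0 < φ x) (hφper : Function.Periodic φ 1)
    (hφ : ContDiff ℝ 2 φ)
    (hcone : ∀ x, |deriv (deriv φ) x| ≤ α * φ x) :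
    ∀ x : ℝ,
      0 < (k:ℝ)⁻¹ * ∑ i ∈ Finset.range k, φ ((x + (i:ℝ)) / (k:ℝ)) ∧
      |deriv (deriv (fun z : ℝ =>
          (k:ℝ)⁻¹ * ∑ i ∈ Finset.range k, φ ((z + (i:ℝ)) / (k:ℝ)))) x| ≤
        (α / (k:ℝ)^2) * ((k:ℝ)⁻¹ * ∑ i ∈ Finset.range k, φ ((x + (i:ℝ)) / (k:ℝ))) :=
  stmt10_general k hk α φ hφpos hφ hcone
end

section
/- Let a' < a, let ψ ∈ 𝒱_{a'} with ∫ψ = 1 (so e^{−a'/2} ≤ ψ ≤ e^{a'/2}), and let ψ₁ ∈ C¹(𝕋, ℝ) with ‖ψ₁‖_{C¹} < min{ (a − a')/(4a'e^{a'/2} + 6e^{a'}), e^{−a'/2}/2 }. Then ψ + ψ₁ ∈ 𝒱_a, i.e., ψ + ψ₁ is positive and |(ψ + ψ₁)'/(ψ + ψ₁)| ≤ a. -/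
open Real

/-- a small `C¹` perturbation of a normalized density in `𝒱_{a'}`
stays in the larger cone `𝒱_a`. -/
theorem stmt11 (a a' : ℝ) (ha' : 0 < a') (haa : a' < a)
    (ψ ψ₁ : ℝ → ℝ) (K : ℝ)
    (hψpos : ∀ x, 0 < ψ x) (hψd : Differentiable ℝ ψ) (hψ₁d : Differentiable ℝ ψ₁)
    (hψper : Function.Periodic ψ 1)
    (hnorm : (∫ x in (0:ℝ)..1, ψ x) = 1)
    (hcone : ∀ x, |deriv ψ x| ≤ a' * ψ x)
    (hlow : ∀ x, Real.exp (-(a'/2)) ≤ ψ x) (hup : ∀ x, ψ x ≤ Real.exp (a'/2))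
    (hK0 : ∀ x, |ψ₁ x| ≤ K) (hK1 : ∀ x, |deriv ψ₁ x| ≤ K)
    (hK : K < min ((a - a') / (4 * a' * Real.exp (a'/2) + 6 * Real.exp a'))
        (Real.exp (-(a'/2)) / 2)) :
    ∀ x, 0 < ψ x + ψ₁ x ∧
      |deriv ψ x + deriv ψ₁ x| ≤ a * (ψ x + ψ₁ x) := by
  intro x
  have hK0x := hK0 x
  have hK1x := hK1 x
  have hKnn : (0:ℝ) ≤ K := le_trans (abs_nonneg _) hK0x
  set E := Real.exp (a'/2) with hEdef
  set m := Real.exp (-(a'/2)) with hmdef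
  have hE1 : 1 ≤ E := Real.one_le_exp (by linarith)
  have hmE : m * E = 1 := by
    rw [hmdef, hEdef, ← Real.exp_add]; simp
  have hmpos : 0 < m := Real.exp_pos _
  have hea : Real.exp a' = E * E := by
    rw [hEdef, ← Real.exp_add]; ring_nf
  have hlx := hlow x
  have hKm : K < m / 2 := lt_of_lt_of_le hK (min_le_right _ _)
  have hKD : K * (4 * a' * E + 6 * (E * E)) < a - a' := by
    have h1 : K < (a - a') / (4 * a' * E + 6 * Real.exp a') :=
      lt_of_lt_of_le hK (min_le_left _ _)
    have hD : 0 < 4 * a' * E + 6 * Real.exp a' := by positivity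
    rw [hea] at h1 hD
    calc K * (4 * a' * E + 6 * (E * E))
        < (a - a') / (4 * a' * E + 6 * (E * E)) * (4 * a' * E + 6 * (E * E)) :=
          mul_lt_mul_of_pos_right h1 hD
      _ = a - a' := by field_simp
  have hψ₁ge : -K ≤ ψ₁ x := (abs_le.mp hK0x).1
  have hpos : 0 < ψ x + ψ₁ x := by linarith
  refine ⟨hpos, ?_⟩
  have habs : |deriv ψ x + deriv ψ₁ x| ≤ a' * ψ x + K := by
    calc |deriv ψ x + deriv ψ₁ x| ≤ |deriv ψ x| + |deriv ψ₁ x| := abs_add_le _ _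
      _ ≤ a' * ψ x + K := add_le_add (hcone x) hK1x
  refine habs.trans ?_
  -- key inequality: a' * ψ x + K ≤ a * (ψ x + ψ₁ x)
  nlinarith [mul_nonneg (mul_nonneg hKnn (by positivity : (0:ℝ) ≤ 4 * a' * E + 6 * (E * E))) (by linarith : (0:ℝ) ≤ m / 2 - K),
    mul_nonneg (by linarith : (0:ℝ) ≤ a - a' - K * (4 * a' * E + 6 * (E * E))) (by linarith : (0:ℝ) ≤ m - K),
    mul_nonneg (by linarith : (0:ℝ) ≤ a - a') (by linarith : (0:ℝ) ≤ ψ x + ψ₁ x - (m - K)),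
    mul_nonneg (by linarith : (0:ℝ) ≤ a') (by linarith : (0:ℝ) ≤ ψ₁ x + K),
    hmE, hKnn, hE1, mul_nonneg hKnn (by linarith : (0:ℝ) ≤ E - 1)]
end
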